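/- Let n, n' ≥ 1, d = n + n', and w ∈ ℝ^d defined by wᵢ = −1/n for i ≤ n and wᵢ = 1/n' for i > n. If Π is a uniformly random d×d permutation matrix, then E[(wᵀΠw)²] = ‖w‖₂⁴ / (d−1). -/

import Mathlib

/-!
Expanding the square, `∑_π (∑ᵢ wᵢ w_{π i})² = ∑_{i,j} wᵢ wⱼ A i j` with
`A i j = ∑_π w_{π i} w_{π j}`. Since `Perm α` acts 2-transitively, `A i i = (d-1)! ‖w‖²` for
every `i` and `A i j` takes a single value for all `i ≠ j`; as `∑ⱼ A i j = 0` when `∑ w = 0`,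
that value is `-A i i / (d - 1)`. Substituting and using `∑ w = 0` once more leaves
`d! ‖w‖⁴ / (d - 1)`.
-/

open Finset

namespace Equiv.Perm

variable {α : Type*} [Fintype α] [DecidableEq α]

section AddCommMonoid

variable {M : Type*} [AddCommMonoid M]

theorem sum_apply_apply_eq_of_ne (f : α → α → M) {i j i' j' : α} (hij : i ≠ j)
    (hij' : i' ≠ j') : ∑ π : Perm α, f (π i) (π j) = ∑ π : Perm α, f (π i') (π j') := by
  obtain ⟨σ, hσi, hσj⟩ :=
    MulAction.is_two_pretransitive_iff.mp (isMultiplyPretransitive α 2) hij' hij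
  rw [Perm.smul_def] at hσi hσj
  rw [← hσi, ← hσj]
  exact Equiv.sum_comp (Equiv.mulRight σ) fun π => f (π i') (π j')

theorem sum_apply_eq (g : α → M) (i j : α) : ∑ π : Perm α, g (π i) = ∑ π : Perm α, g (π j) := by
  conv_lhs => rw [← swap_apply_left j i]
  exact Equiv.sum_comp (Equiv.mulRight (swap j i)) fun π => g (π j)

theorem card_nsmul_sum_apply (g : α → M) (i : α) :
    Fintype.card α • ∑ π : Perm α, g (π i) = (Fintype.card α).factorial • ∑ a, g a := calc
  Fintype.card α • ∑ π : Perm α, g (π i) = ∑ j, ∑ π : Perm α, g (π j) := by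
    rw [← card_univ, ← sum_const]
    exact sum_congr rfl fun j _ => sum_apply_eq g i j
  _ = ∑ π : Perm α, ∑ j, g (π j) := sum_comm
  _ = (Fintype.card α).factorial • ∑ a, g a := by
    simp only [Equiv.sum_comp, sum_const, card_univ, Fintype.card_perm]

end AddCommMonoid

section Real

variable {w : α → ℝ}

theorem card_sub_one_mul_sum_apply_mul_apply_of_ne (hw : ∑ a, w a = 0) {i j : α}
    (hij : i ≠ j) :
    ((Fintype.card α : ℝ) - 1) * ∑ π : Perm α, w (π i) * w (π j) =
      -∑ π : Perm α, w (π i) * w (π i) := by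
  have hrow : ∑ k, ∑ π : Perm α, w (π i) * w (π k) = 0 := by
    rw [sum_comm]
    exact sum_eq_zero fun π _ => by rw [← mul_sum, Equiv.sum_comp π w, hw, mul_zero]
  rw [← add_sum_erase _ _ (mem_univ i),
    sum_congr rfl fun k hk =>
      sum_apply_apply_eq_of_ne (fun a b => w a * w b) (ne_of_mem_erase hk).symm hij,
    sum_const, card_erase_of_mem (mem_univ i), card_univ, nsmul_eq_mul,
    Nat.cast_pred (Fintype.card_pos_iff.mpr ⟨i⟩)] at hrow
  linarith

theorem card_sub_one_mul_sum_sq_sum_mul_apply (hw : ∑ a, w a = 0) :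
    ((Fintype.card α : ℝ) - 1) * ∑ π : Perm α, (∑ i, w i * w (π i)) ^ 2 =
      (Fintype.card α).factorial * (∑ i, w i ^ 2) ^ 2 := by
  set d : ℝ := (Fintype.card α : ℝ)
  have hexpand : ∑ π : Perm α, (∑ i, w i * w (π i)) ^ 2 =
      ∑ i, ∑ j, w i * w j * ∑ π : Perm α, w (π i) * w (π j) := by
    simp_rw [sq, sum_mul_sum]
    rw [sum_comm]
    refine sum_congr rfl fun i _ => ?_
    rw [sum_comm]
    refine sum_congr rfl fun j _ => ?_
    rw [mul_sum]
    exact sum_congr rfl fun π _ => by ring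
  have hrow (i : α) : (d - 1) * ∑ j, w i * w j * ∑ π : Perm α, w (π i) * w (π j) =
      w i ^ 2 * (d * ∑ π : Perm α, w (π i) * w (π i)) := by
    have hoff : ∀ j ∈ univ.erase i, (d - 1) * (w i * w j * ∑ π : Perm α, w (π i) * w (π j)) =
        -(w i * ∑ π : Perm α, w (π i) * w (π i)) * w j := fun j hj => by
      rw [mul_left_comm, card_sub_one_mul_sum_apply_mul_apply_of_ne hw (ne_of_mem_erase hj).symm]
      ring
    rw [← add_sum_erase _ _ (mem_univ i), mul_add, Finset.mul_sum _ _ (d - 1), sum_congr rfl hoff,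
      ← Finset.mul_sum, sum_erase_eq_sub (mem_univ i), hw]
    ring
  have hdiag (i : α) : d * ∑ π : Perm α, w (π i) * w (π i) =
      (Fintype.card α).factorial * ∑ a, w a ^ 2 := by
    simpa only [nsmul_eq_mul, sq] using card_nsmul_sum_apply (fun a => w a * w a) i
  rw [hexpand, mul_sum]
  simp only [hrow, hdiag]
  rw [← sum_mul, sq, mul_comm, mul_assoc]

end Real

end Equiv.Perm

theorem Fin.sum_univ_add_ite_val_lt {M : Type*} [AddCommMonoid M] (n n' : ℕ) (a b : M) :
    ∑ i : Fin (n + n'), (if (i : ℕ) < n then a else b) = n • a + n' • b := by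
  simp [Fin.sum_univ_add]

/-- Let `d = n + n'` and `w ∈ ℝ^d` with `wᵢ = -1/n` for `i ≤ n` and `wᵢ = 1/n'`
otherwise. For a uniformly random permutation matrix `Π`,
`E[(wᵀ Π w)²] = ‖w‖₂⁴ / (d - 1)`. Here `wᵀ Π w = ∑ i, w i * w (π i)`, and the
expectation is the average over all `d!` permutations. -/
theorem permutation_quadratic_form_second_moment
    (n n' : ℕ) (hn : 1 ≤ n) (hn' : 1 ≤ n') :
    let d := n + n'
    let w : Fin d → ℝ := fun i => if (i : ℕ) < n then -1 / n else 1 / n'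
    (∑ π : Equiv.Perm (Fin d), (∑ i, w i * w (π i)) ^ 2) / (Nat.factorial d : ℝ) =
      (∑ i, (w i) ^ 2) ^ 2 / ((d : ℝ) - 1) := by
  intro d w
  have hw : ∑ i, w i = 0 := by
    have : (n : ℝ) ≠ 0 := by positivity
    have : (n' : ℝ) ≠ 0 := by positivity
    change ∑ i : Fin (n + n'), (if (i : ℕ) < n then (-1 / n : ℝ) else 1 / n') = 0
    rw [Fin.sum_univ_add_ite_val_lt, nsmul_eq_mul, nsmul_eq_mul]
    field_simp
    ring
  have hd : (d : ℝ) - 1 ≠ 0 := by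
    have : (2 : ℝ) ≤ d := by exact_mod_cast (show 2 ≤ d by omega)
    linarith
  have key := Equiv.Perm.card_sub_one_mul_sum_sq_sum_mul_apply hw
  rw [Fintype.card_fin] at key
  rw [div_eq_div_iff (by positivity) hd, mul_comm, key]
  ring
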